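/- arXiv:2111.01177 — 4 statements merged into one kernel-verified Lean document; each statement's English description precedes it below -/
import Mathlib

section
/- (Privacy of DP-Sinkhorn's sanitized gradient release, quantitative core of Theorem 1.) Let n, d be natural numbers, Δ > 0, σ > 0, and let α > 1 be real. Let G, G' : Fin n → (Fin d → ℝ) be two gradient matrices whose rows are clipped, i.e. ‖G_i‖₂ ≤ Δ and ‖G'_i‖₂ ≤ Δ for every i < n. For each row i and coordinate j, let p_{G_{ij}, Δ²σ²} denote the density of N(G_{ij}, Δ²σ²) on ℝ. Then the integral over (Fin n × Fin d) → ℝ (with respect to Lebesgue measure) of ∏_{i<n} ∏_{j<d} p_{G_{ij}, Δ²σ²}(x_{ij})^α · p_{G'_{ij}, Δ²σ²}(x_{ij})^{1−α} is at most exp((α−1) · 2αn/σ²). Equivalently, the Rényi divergence of order α between the two product Gaussian output distributions is at most 2αn/σ², i.e. releasing the n noised, clipped rows satisfies (α, 2αn/σ²)-RDP. -/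
/-!
The Rényi integral of two product Gaussians factorizes over coordinates. In one coordinate,
with common standard deviation `s`, completing the square gives
`p_m^α p_{m'}^{1-α} = exp (α(α-1)(m-m')²/(2s²)) · p_{αm+(1-α)m'}`, so the integral is that
exponential factor. Clipping bounds the squared distance of two rows by `(2Δ)²`, and with
`s = Δσ` the factor `Δ²` cancels, leaving `α(α-1)·4Δ²n/(2Δ²σ²) = (α-1)·2αn/σ²`.
-/

open Real MeasureTheory

/-- Density of the Gaussian measure `N(m, s²)` on `ℝ`, where `s` is the standard
deviation: `p_{m,s²}(x) = (s √(2π))⁻¹ exp (−(x−m)²/(2s²))`. -/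
noncomputable def gaussPdf (m s : ℝ) (x : ℝ) : ℝ :=
  (s * Real.sqrt (2 * Real.pi))⁻¹ * Real.exp (-(x - m) ^ 2 / (2 * s ^ 2))

open ProbabilityTheory

lemma gaussPdf_eq_gaussianPDFReal (m : ℝ) {s : ℝ} (hs : 0 ≤ s) :
    gaussPdf m s = gaussianPDFReal m (s ^ 2).toNNReal := by
  funext x
  rw [gaussPdf, gaussianPDFReal_def, Real.coe_toNNReal _ (sq_nonneg s), mul_comm (2 * π),
    Real.sqrt_mul (sq_nonneg s), Real.sqrt_sq hs]

lemma integral_gaussPdf (m : ℝ) {s : ℝ} (hs : 0 < s) : ∫ x, gaussPdf m s x = 1 := by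
  rw [gaussPdf_eq_gaussianPDFReal m hs.le]
  exact integral_gaussianPDFReal_eq_one m (by simpa using hs.ne')

lemma gaussPdf_rpow_mul_gaussPdf_rpow (m m' α : ℝ) {s : ℝ} (hs : 0 < s) (x : ℝ) :
    gaussPdf m s x ^ α * gaussPdf m' s x ^ (1 - α) =
      exp (α * (α - 1) * (m - m') ^ 2 / (2 * s ^ 2)) * gaussPdf (α * m + (1 - α) * m') s x := by
  set C := (s * √(2 * π))⁻¹
  have hC : 0 < C := by positivity
  have hexp : -(x - m) ^ 2 / (2 * s ^ 2) * α + -(x - m') ^ 2 / (2 * s ^ 2) * (1 - α) =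
      α * (α - 1) * (m - m') ^ 2 / (2 * s ^ 2) +
        -(x - (α * m + (1 - α) * m')) ^ 2 / (2 * s ^ 2) := by
    field_simp
    ring
  calc gaussPdf m s x ^ α * gaussPdf m' s x ^ (1 - α)
      = C ^ (α + (1 - α)) *
          exp (-(x - m) ^ 2 / (2 * s ^ 2) * α + -(x - m') ^ 2 / (2 * s ^ 2) * (1 - α)) := by
        rw [gaussPdf, gaussPdf, mul_rpow hC.le (exp_nonneg _), mul_rpow hC.le (exp_nonneg _),
          ← exp_mul, ← exp_mul, rpow_add hC, exp_add]
        ring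
    _ = _ := by rw [add_sub_cancel, rpow_one, hexp, exp_add, gaussPdf]; ring

lemma integral_gaussPdf_rpow_mul_gaussPdf_rpow (m m' α : ℝ) {s : ℝ} (hs : 0 < s) :
    ∫ x, gaussPdf m s x ^ α * gaussPdf m' s x ^ (1 - α) =
      exp (α * (α - 1) * (m - m') ^ 2 / (2 * s ^ 2)) := by
  simp_rw [gaussPdf_rpow_mul_gaussPdf_rpow m m' α hs]
  rw [integral_const_mul, integral_gaussPdf _ hs, mul_one]

lemma integral_prod_gaussPdf_rpow_mul_gaussPdf_rpow {ι : Type*} [Fintype ι] (m m' : ι → ℝ)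
    (α : ℝ) {s : ℝ} (hs : 0 < s) :
    ∫ x : ι → ℝ, ∏ k, gaussPdf (m k) s (x k) ^ α * gaussPdf (m' k) s (x k) ^ (1 - α) =
      exp (α * (α - 1) * (∑ k, (m k - m' k) ^ 2) / (2 * s ^ 2)) := by
  rw [integral_fintype_prod_volume_eq_prod
    (fun k y => gaussPdf (m k) s y ^ α * gaussPdf (m' k) s y ^ (1 - α))]
  simp_rw [integral_gaussPdf_rpow_mul_gaussPdf_rpow _ _ α hs, ← exp_sum, Finset.mul_sum,
    Finset.sum_div]

lemma sum_sub_sq_le_of_sqrt_sum_sq_le {ι : Type*} [Fintype ι] {a b : ι → ℝ} {Δ : ℝ}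
    (ha : √(∑ k, a k ^ 2) ≤ Δ) (hb : √(∑ k, b k ^ 2) ≤ Δ) :
    ∑ k, (a k - b k) ^ 2 ≤ (2 * Δ) ^ 2 := by
  have hnorm (v : ι → ℝ) : ‖WithLp.toLp 2 v‖ = √(∑ k, v k ^ 2) := by
    simp [EuclideanSpace.norm_eq]
  have hsub : √(∑ k, (a k - b k) ^ 2) ≤ 2 * Δ :=
    calc √(∑ k, (a k - b k) ^ 2) = ‖WithLp.toLp 2 a - WithLp.toLp 2 b‖ := by
          rw [← WithLp.toLp_sub, hnorm]; rfl
      _ ≤ ‖WithLp.toLp 2 a‖ + ‖WithLp.toLp 2 b‖ := norm_sub_le _ _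
      _ ≤ 2 * Δ := by rw [hnorm, hnorm]; linarith
  exact (Real.sqrt_le_iff.1 hsub).2

/-- **Quantitative core of DP-Sinkhorn's Theorem 1.**
If the `n` rows of the gradient matrices `G, G' : Fin n → Fin d → ℝ` are clipped to
L2-norm at most `Δ`, then the order-`α` Rényi integral between the corresponding
product Gaussian output distributions with per-coordinate noise `N(·, Δ²σ²)` is at
most `exp ((α−1) · 2αn/σ²)`: releasing the `n` noised, clipped rows satisfies
`(α, 2αn/σ²)`-RDP. -/
theorem dp_sinkhorn_sanitized_gradient_rdp
    (n d : ℕ) (Δ σ α : ℝ) (hΔ : 0 < Δ) (hσ : 0 < σ) (hα : 1 < α)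
    (G G' : Fin n → Fin d → ℝ)
    (hG : ∀ i, Real.sqrt (∑ j, G i j ^ 2) ≤ Δ)
    (hG' : ∀ i, Real.sqrt (∑ j, G' i j ^ 2) ≤ Δ) :
    (∫ x : Fin n × Fin d → ℝ,
        ∏ i : Fin n, ∏ j : Fin d,
          gaussPdf (G i j) (Δ * σ) (x (i, j)) ^ α *
            gaussPdf (G' i j) (Δ * σ) (x (i, j)) ^ (1 - α)) ≤
      Real.exp ((α - 1) * (2 * α * n / σ ^ 2)) := by
  have hsum : ∑ p : Fin n × Fin d, (G p.1 p.2 - G' p.1 p.2) ^ 2 ≤ n * (2 * Δ) ^ 2 :=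
    calc ∑ p : Fin n × Fin d, (G p.1 p.2 - G' p.1 p.2) ^ 2
        = ∑ i, ∑ j, (G i j - G' i j) ^ 2 := Fintype.sum_prod_type _
      _ ≤ ∑ _ : Fin n, (2 * Δ) ^ 2 :=
          Finset.sum_le_sum fun i _ => sum_sub_sq_le_of_sqrt_sum_sq_le (hG i) (hG' i)
      _ = n * (2 * Δ) ^ 2 := by simp
  simp_rw [← Fintype.prod_prod_type', Prod.mk.eta]
  rw [integral_prod_gaussPdf_rpow_mul_gaussPdf_rpow (fun p : Fin n × Fin d => G p.1 p.2)
    (fun p => G' p.1 p.2) α (mul_pos hΔ hσ), exp_le_exp]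
  have hα' : 0 ≤ α * (α - 1) := by nlinarith
  calc α * (α - 1) * (∑ p : Fin n × Fin d, (G p.1 p.2 - G' p.1 p.2) ^ 2) / (2 * (Δ * σ) ^ 2)
      ≤ α * (α - 1) * (n * (2 * Δ) ^ 2) / (2 * (Δ * σ) ^ 2) := by gcongr
    _ = (α - 1) * (2 * α * n / σ ^ 2) := by field_simp
end

section
/- (Theorem 2, Gaussian mechanism (ε,δ)-DP.) Let ε ∈ (0,1), δ ∈ (0,1), Δ > 0 and c > 0 with c² > 2 log(1.25/δ), and let σ ≥ cΔ/ε. Then for any two means m, m' ∈ ℝ with |m − m'| ≤ Δ and any Borel measurable set S ⊆ ℝ, the Gaussian measures satisfy N(m, σ²)(S) ≤ e^ε · N(m', σ²)(S) + δ. -/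
/-! The privacy loss `log (N(m, σ²) density / N(m', σ²) density)` is affine in `x`. Where it is
at most `ε` the densities compare pointwise with factor `e^ε`; under `N(m, σ²)` the complementary
event has the probability `P(Z > ε/η - η/2)` of a standard normal `Z`, with `η = |m - m'|/σ ≤ ε/c`,
so `P(Z > c - ε/(2c))` bounds it. If `2c² ≥ ε`, the tail bound `P(Z > t) ≤ e^{-t²/2}/2` and
`e^{-c²/2} < δ/1.25` give `δ`; otherwise `c² < 1/2`, which forces `δ > 0.93`, and the crude bound
`P(Z > t) ≤ 1/2 + |t|/√(2π)` suffices. -/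

open Real MeasureTheory ProbabilityTheory

open scoped NNReal ENNReal

open Set

namespace MeasureTheory

variable {α : Type*} [MeasurableSpace α] {μ : Measure α} [SFinite μ] {f g : α → ℝ≥0∞}
  {k : ℝ≥0∞}

theorem withDensity_apply_le_mul_of_forall_mem (hg : Measurable g) {S : Set α}
    (hfg : ∀ x ∈ S, f x ≤ k * g x) : μ.withDensity f S ≤ k * μ.withDensity g S := by
  rw [withDensity_apply', withDensity_apply', ← lintegral_const_mul _ hg]
  exact setLIntegral_mono (hg.const_mul k) hfg

theorem withDensity_apply_le_mul_add (hg : Measurable g) {B : Set α}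
    (hfg : ∀ x ∈ B, f x ≤ k * g x) (S : Set α) :
    μ.withDensity f S ≤ k * μ.withDensity g S + μ.withDensity f Bᶜ :=
  calc μ.withDensity f S ≤ μ.withDensity f (S ∩ B) + μ.withDensity f Bᶜ :=
        (measure_le_inter_add_sdiff _ S B).trans (by gcongr; exact fun x hx ↦ hx.2)
    _ ≤ k * μ.withDensity g S + μ.withDensity f Bᶜ := by
        gcongr
        exact (withDensity_apply_le_mul_of_forall_mem hg fun x hx ↦ hfg x hx.2).trans
          (by gcongr; exact inter_subset_left)

end MeasureTheory

namespace ProbabilityTheory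

/-- `log (gaussianPDFReal m v x / gaussianPDFReal m' v x)`. -/
noncomputable def gaussianPrivacyLoss (m m' : ℝ) (v : ℝ≥0) (x : ℝ) : ℝ :=
  (m - m') * (x - (m + m') / 2) / v

theorem gaussianPDFReal_eq_exp_privacyLoss_mul (m m' : ℝ) {v : ℝ≥0} (hv : v ≠ 0) (x : ℝ) :
    gaussianPDFReal m v x = exp (gaussianPrivacyLoss m m' v x) * gaussianPDFReal m' v x := by
  have hv' : (v : ℝ) ≠ 0 := NNReal.coe_ne_zero.2 hv
  rw [gaussianPDFReal, gaussianPDFReal, mul_left_comm, ← exp_add, gaussianPrivacyLoss]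
  congr 3
  field_simp
  ring

theorem gaussianPDF_le_exp_mul {m m' ε x : ℝ} {v : ℝ≥0} (hv : v ≠ 0)
    (hx : gaussianPrivacyLoss m m' v x ≤ ε) :
    gaussianPDF m v x ≤ ENNReal.ofReal (exp ε) * gaussianPDF m' v x := by
  rw [gaussianPDF, gaussianPDF, gaussianPDFReal_eq_exp_privacyLoss_mul m m' hv,
    ENNReal.ofReal_mul (exp_nonneg _)]
  gcongr

theorem gaussianReal_apply_le_exp_mul_add (m m' ε : ℝ) {v : ℝ≥0} (hv : v ≠ 0) (S : Set ℝ) :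
    gaussianReal m v S ≤ ENNReal.ofReal (exp ε) * gaussianReal m' v S +
      gaussianReal m v {x | ε < gaussianPrivacyLoss m m' v x} := by
  simp_rw [gaussianReal_of_var_ne_zero _ hv, ← not_le, ← compl_ofPred]
  exact withDensity_apply_le_mul_add (measurable_gaussianPDF m' v)
    (fun x hx ↦ gaussianPDF_le_exp_mul hv hx) S

theorem gaussianReal_map_const_mul_sub_self (μ : ℝ) (v : ℝ≥0) (a : ℝ) :
    (gaussianReal μ v).map (fun x ↦ a * (x - μ)) =
      gaussianReal 0 (.mk (a ^ 2) (sq_nonneg _) * v) := by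
  have hcomp : (fun x ↦ a * (x - μ)) = (a * ·) ∘ (· - μ) := rfl
  rw [hcomp, ← Measure.map_map (by fun_prop) (by fun_prop), gaussianReal_map_sub_const,
    gaussianReal_map_const_mul, sub_self, mul_zero]

theorem gaussianReal_Ioi_zero {v : ℝ≥0} (hv : v ≠ 0) : gaussianReal 0 v (Ioi 0) = 2⁻¹ := by
  have := nullSingletonClass_gaussianReal (μ := 0) hv
  have hsymm : gaussianReal 0 v (Iio 0) = gaussianReal 0 v (Ioi 0) := by
    conv_lhs => rw [← neg_zero, ← gaussianReal_map_neg]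
    rw [Measure.map_apply measurable_neg measurableSet_Iio]
    congr 1
    ext x
    simp
  have htotal : gaussianReal 0 v (Ioi 0) + gaussianReal 0 v (Iio 0) = 1 := by
    rw [measure_congr (Iio_ae_eq_Iic (μ := gaussianReal 0 v)), ← compl_Ioi,
      measure_add_measure_compl measurableSet_Ioi, measure_univ]
  rw [hsymm, ← two_mul] at htotal
  exact ENNReal.eq_inv_of_mul_eq_one_left (by rwa [mul_comm])

theorem gaussianReal_Ioi_le_exp {v : ℝ≥0} (hv : v ≠ 0) {a : ℝ} (ha : 0 ≤ a) :
    gaussianReal 0 v (Ioi a) ≤ ENNReal.ofReal (exp (-a ^ 2 / (2 * v))) * 2⁻¹ := by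
  have hshift : gaussianReal 0 v (Ioi a) = gaussianReal (-a) v (Ioi 0) := by
    have hmap := gaussianReal_map_add_const (μ := -a) (v := v) a
    rw [neg_add_cancel] at hmap
    rw [← hmap, Measure.map_apply (measurable_add_const a) measurableSet_Ioi,
      preimage_add_const_Ioi, sub_self]
  rw [hshift, ← gaussianReal_Ioi_zero hv, gaussianReal_of_var_ne_zero _ hv,
    gaussianReal_of_var_ne_zero _ hv]
  refine withDensity_apply_le_mul_of_forall_mem (measurable_gaussianPDF 0 v)
    fun x hx ↦ gaussianPDF_le_exp_mul hv ?_
  have hv' : (0 : ℝ) < v := by positivity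
  have hx : 0 < x := hx
  rw [gaussianPrivacyLoss, div_le_div_iff₀ hv' (by positivity)]
  nlinarith [mul_nonneg (mul_nonneg ha hx.le) hv'.le]

theorem gaussianReal_le_mul_volume (μ : ℝ) {v : ℝ≥0} (hv : v ≠ 0) (s : Set ℝ) :
    gaussianReal μ v s ≤ ENNReal.ofReal (√(2 * π * v))⁻¹ * volume s := by
  rw [gaussianReal_of_var_ne_zero _ hv]
  refine (withDensity_apply_le_mul_of_forall_mem (g := 1) measurable_const fun x _ ↦ ?_).trans_eq
    (by rw [withDensity_one])
  rw [Pi.one_apply, mul_one, gaussianPDF, gaussianPDFReal]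
  refine ENNReal.ofReal_le_ofReal (mul_le_of_le_one_right (by positivity) ?_)
  exact exp_le_one_iff.2 (div_nonpos_of_nonpos_of_nonneg (by nlinarith) (by positivity))

theorem gaussianReal_Ioi_le {v : ℝ≥0} (hv : v ≠ 0) (t : ℝ) :
    gaussianReal 0 v (Ioi t) ≤ ENNReal.ofReal (-t / √(2 * π * v)) + 2⁻¹ :=
  calc gaussianReal 0 v (Ioi t) ≤ gaussianReal 0 v (Ioc t 0 ∪ Ioi 0) :=
        measure_mono fun x (hx : t < x) ↦ (le_or_gt x 0).imp (⟨hx, ·⟩) id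
    _ ≤ gaussianReal 0 v (Ioc t 0) + gaussianReal 0 v (Ioi 0) := measure_union_le _ _
    _ ≤ ENNReal.ofReal (-t / √(2 * π * v)) + 2⁻¹ := by
        rw [gaussianReal_Ioi_zero hv]
        refine add_le_add_left ((gaussianReal_le_mul_volume 0 hv _).trans_eq ?_) _
        rw [Real.volume_Ioc, ← ENNReal.ofReal_mul (by positivity), zero_sub, inv_mul_eq_div]

theorem gaussianReal_setOf_lt_gaussianPrivacyLoss {σ : ℝ} (hσ : 0 < σ) {m m' : ℝ} (hm : m ≠ m')
    (ε : ℝ) :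
    gaussianReal m (σ ^ 2).toNNReal {x | ε < gaussianPrivacyLoss m m' (σ ^ 2).toNNReal x} =
      gaussianReal 0 1 (Ioi (ε / (|m - m'| / σ) - |m - m'| / σ / 2)) := by
  set s := |m - m'|
  have hs : 0 < s := abs_pos.2 (sub_ne_zero.2 hm)
  set η := s / σ with hη_def
  have hη : 0 < η := by positivity
  set u := (m - m') / s
  have hu : u * s = m - m' := div_mul_cancel₀ _ hs.ne'
  have hu2 : u ^ 2 = 1 := by rw [div_pow, sq_abs, div_self (by positivity)]
  have hstd : (gaussianReal m (σ ^ 2).toNNReal).map (fun x ↦ u / σ * (x - m)) =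
      gaussianReal 0 1 := by
    rw [gaussianReal_map_const_mul_sub_self]
    congr 1
    ext
    simp [div_pow, hu2, Real.coe_toNNReal _ (sq_nonneg σ), hσ.ne']
  have hset : {x | ε < gaussianPrivacyLoss m m' (σ ^ 2).toNNReal x} =
      (fun x ↦ u / σ * (x - m)) ⁻¹' Ioi (ε / η - η / 2) := by
    ext x
    have hL :
        gaussianPrivacyLoss m m' (σ ^ 2).toNNReal x = η * (u / σ * (x - m)) + η ^ 2 / 2 := by
      have hsq : (m - m') ^ 2 = s ^ 2 := (sq_abs _).symm
      calc gaussianPrivacyLoss m m' (σ ^ 2).toNNReal x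
          = ((m - m') * (x - m) + (m - m') ^ 2 / 2) / σ ^ 2 := by
            rw [gaussianPrivacyLoss, Real.coe_toNNReal _ (sq_nonneg σ)]
            ring
        _ = η * (u / σ * (x - m)) + η ^ 2 / 2 := by
            rw [hsq, ← hu, hη_def]
            field_simp
    have hthr : ε / η - η / 2 = (ε - η ^ 2 / 2) / η := by field_simp
    simp only [mem_ofPred_eq, mem_preimage, mem_Ioi, hL, hthr, div_lt_iff₀ hη]
    constructor <;> intro h <;> linarith
  rw [hset, ← Measure.map_apply (by fun_prop) measurableSet_Ioi, hstd]

theorem lt_mul_exp_of_two_mul_log_lt {δ c : ℝ} (hδ : 0 < δ) (h : 2 * log (1.25 / δ) < c ^ 2) :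
    1.25 < δ * exp (c ^ 2 / 2) := by
  have h' := (log_lt_iff_lt_exp (by positivity)).1 (by linarith : log (1.25 / δ) < c ^ 2 / 2)
  rwa [div_lt_iff₀ hδ, mul_comm] at h'

theorem exp_neg_sq_sub_div_div_two_le {ε δ c : ℝ} (hε0 : 0 < ε) (hε1 : ε < 1) (hc : 0 < c)
    (hδc : 1.25 < δ * exp (c ^ 2 / 2)) : exp (-(c - ε / (2 * c)) ^ 2 / 2) / 2 ≤ δ := by
  have hcε : ε / (2 * c) * (2 * c) = ε := div_mul_cancel₀ _ (by positivity)
  have hsq : c ^ 2 - ε ≤ (c - ε / (2 * c)) ^ 2 := by nlinarith [sq_nonneg (ε / (2 * c))]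
  have hexp : exp (ε / 2) ≤ 2 := by
    refine (exp_bound_div_one_sub_of_interval (by positivity) (by linarith)).trans ?_
    rw [div_le_iff₀ (by linarith)]
    linarith
  calc exp (-(c - ε / (2 * c)) ^ 2 / 2) / 2 ≤ exp (ε / 2) * exp (-(c ^ 2 / 2)) / 2 := by
        rw [← exp_add]
        gcongr
        linarith
    _ ≤ 2 * exp (-(c ^ 2 / 2)) / 2 := by gcongr
    _ ≤ δ := by
        rw [exp_neg]
        field_simp
        nlinarith [exp_pos (c ^ 2 / 2)]

theorem div_sub_div_two_add_inv_le {ε δ c : ℝ} (hε1 : ε < 1) (hδ : δ ∈ Ioo 0 1) (hc : 0 < c)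
    (hδc : 1.25 < δ * exp (c ^ 2 / 2)) (hcε : 2 * c ^ 2 < ε) :
    (ε / (2 * c) - c) / 2 + 2⁻¹ ≤ δ := by
  obtain ⟨hδ0, hδ1⟩ := hδ
  have hexp : exp (c ^ 2 / 2) ≤ 1 / (1 - c ^ 2 / 2) :=
    exp_bound_div_one_sub_of_interval (by positivity) (by linarith)
  have hδ' : 1.25 * (1 - c ^ 2 / 2) < δ := by
    have := hδc.trans_le (mul_le_mul_of_nonneg_left hexp hδ0.le)
    rwa [mul_one_div, lt_div_iff₀ (by linarith)] at this
  have hc4 : 0.4 < c ^ 2 := by nlinarith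
  have hc6 : 0.6 < c := by nlinarith
  have hgap : ε / (2 * c) - c < 0.875 := by
    rw [div_sub' (by positivity), div_lt_iff₀ (by positivity)]
    nlinarith
  linarith

theorem gaussianReal_Ioi_sub_div_le {ε δ c : ℝ} (hε : ε ∈ Ioo 0 1) (hδ : δ ∈ Ioo 0 1)
    (hc : 0 < c) (hc2 : 2 * log (1.25 / δ) < c ^ 2) :
    gaussianReal 0 1 (Ioi (c - ε / (2 * c))) ≤ ENNReal.ofReal δ := by
  have hδc := lt_mul_exp_of_two_mul_log_lt hδ.1 hc2
  rcases le_or_gt 0 (c - ε / (2 * c)) with hb | hb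
  · refine (gaussianReal_Ioi_le_exp one_ne_zero hb).trans ?_
    rw [← ENNReal.ofReal_ofNat 2, ← ENNReal.ofReal_inv_of_pos two_pos,
      ← ENNReal.ofReal_mul (exp_nonneg _), ← div_eq_mul_inv, NNReal.coe_one, mul_one]
    exact ENNReal.ofReal_le_ofReal (exp_neg_sq_sub_div_div_two_le hε.1 hε.2 hc hδc)
  · have hcε : 2 * c ^ 2 < ε := by
      have := div_mul_cancel₀ ε (by positivity : 2 * c ≠ 0)
      nlinarith
    have hsqrt : 2 ≤ √(2 * π) := by
      rw [le_sqrt zero_le_two (by positivity)]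
      nlinarith [pi_gt_three]
    refine (gaussianReal_Ioi_le one_ne_zero _).trans ?_
    rw [NNReal.coe_one, mul_one, ← ENNReal.ofReal_ofNat 2, ← ENNReal.ofReal_inv_of_pos two_pos,
      ← ENNReal.ofReal_add (div_nonneg (by linarith) (by positivity)) (by norm_num)]
    refine ENNReal.ofReal_le_ofReal ((add_le_add_left ?_ _).trans
      (div_sub_div_two_add_inv_le hε.2 hδ hc hδc hcε))
    rw [neg_sub]
    gcongr
    linarith

end ProbabilityTheory

theorem gaussian_mechanism_dp_general
    (ε δ Δ c σ : ℝ)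
    (hε : ε ∈ Set.Ioo (0 : ℝ) 1) (hδ : δ ∈ Set.Ioo (0 : ℝ) 1)
    (hc : 0 < c) (hc2 : 2 * Real.log (1.25 / δ) < c ^ 2)
    (hσ : c * Δ / ε ≤ σ)
    (m m' : ℝ) (hm : |m - m'| ≤ Δ)
    (S : Set ℝ) :
    gaussianReal m (σ ^ 2).toNNReal S ≤
      ENNReal.ofReal (Real.exp ε) * gaussianReal m' (σ ^ 2).toNNReal S +
        ENNReal.ofReal δ := by
  rcases eq_or_ne m m' with rfl | hmm
  · exact le_add_right (le_mul_of_one_le_left' (ENNReal.one_le_ofReal.2 (one_le_exp hε.1.le)))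
  have hs : 0 < |m - m'| := abs_pos.2 (sub_ne_zero.2 hmm)
  have hcΔ : c * Δ ≤ σ * ε := (div_le_iff₀ hε.1).1 hσ
  have hσ0 : 0 < σ := by nlinarith [hε.1]
  have hv : (σ ^ 2).toNNReal ≠ 0 := (Real.toNNReal_pos.2 (by positivity)).ne'
  refine (gaussianReal_apply_le_exp_mul_add m m' ε hv S).trans ?_
  gcongr
  have hη : |m - m'| / σ ≤ ε / c := by
    rw [div_le_div_iff₀ hσ0 hc]
    nlinarith
  have hthreshold : c - ε / (2 * c) ≤ ε / (|m - m'| / σ) - |m - m'| / σ / 2 := by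
    have h1 : c ≤ ε / (|m - m'| / σ) := by
      rw [le_div_iff₀ (by positivity)]
      exact (le_div_iff₀' hc).1 hη
    have h2 : |m - m'| / σ / 2 ≤ ε / (2 * c) := by
      rw [mul_comm, ← div_div]
      gcongr
    linarith
  rw [gaussianReal_setOf_lt_gaussianPrivacyLoss hσ0 hmm]
  exact (measure_mono (Ioi_subset_Ioi hthreshold)).trans (gaussianReal_Ioi_sub_div_le hε hδ hc hc2)

/-- **Theorem 2: the Gaussian mechanism satisfies `(ε,δ)`-DP.**
For `ε, δ ∈ (0,1)`, sensitivity bound `Δ > 0` and `c > 0` with `c² > 2 log(1.25/δ)`,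
if `σ ≥ cΔ/ε` then for any means `m, m'` with `|m − m'| ≤ Δ` and any measurable
`S ⊆ ℝ`, `N(m,σ²)(S) ≤ e^ε · N(m',σ²)(S) + δ`. -/
theorem gaussian_mechanism_dp
    (ε δ Δ c σ : ℝ)
    (hε : ε ∈ Set.Ioo (0 : ℝ) 1) (hδ : δ ∈ Set.Ioo (0 : ℝ) 1)
    (hΔ : 0 < Δ) (hc : 0 < c) (hc2 : 2 * Real.log (1.25 / δ) < c ^ 2)
    (hσ : c * Δ / ε ≤ σ)
    (m m' : ℝ) (hm : |m - m'| ≤ Δ)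
    (S : Set ℝ) (hS : MeasurableSet S) :
    gaussianReal m (σ ^ 2).toNNReal S ≤
      ENNReal.ofReal (Real.exp ε) * gaussianReal m' (σ ^ 2).toNNReal S +
        ENNReal.ofReal δ :=
  gaussian_mechanism_dp_general ε δ Δ c σ hε hδ hc hc2 hσ m m' hm S
end

section
/- (RDP to DP conversion.) Let μ and ν be probability measures on a measurable space with μ ≪ ν, let α > 1 be real and δ ∈ (0,1), and suppose the order-α Rényi divergence satisfies (1/(α−1)) · log ∫ (dμ/dν)^α dν ≤ ε for some ε ≥ 0. Then for every measurable set S: μ(S) ≤ exp(ε + log(1/δ)/(α−1)) · ν(S) + δ. In other words, any mechanism satisfying (α, ε)-RDP also satisfies (ε + log(1/δ)/(α−1), δ)-DP. -/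
/-!
Let `f = dμ/dν` and `t = exp (ε + log (1/δ) / (α - 1))`. On `S ∩ {f < t}` the measure `μ` is at
most `t • ν`. On `{f ≥ t}` we have `t ^ (α - 1) * f ≤ f ^ α`, so integrating against `ν` gives
`t ^ (α - 1) * μ {f ≥ t} ≤ ∫ f ^ α dν ≤ exp ((α - 1) ε)`; the choice of `t` makes
`t ^ (α - 1) * δ = exp ((α - 1) ε)`, hence `μ {f ≥ t} ≤ δ`.
-/

open MeasureTheory ENNReal

theorem ENNReal.rpow_sub_one_mul_le_rpow {a b : ℝ≥0∞} {p : ℝ} (hp : 1 ≤ p) (hab : a ≤ b) :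
    a ^ (p - 1) * b ≤ b ^ p :=
  calc a ^ (p - 1) * b ≤ b ^ (p - 1) * b ^ (1 : ℝ) := by rw [rpow_one]; gcongr
    _ = b ^ p := by rw [← rpow_add_of_nonneg _ _ (sub_nonneg.2 hp) zero_le_one, sub_add_cancel]

namespace MeasureTheory.Measure

variable {X : Type*} [MeasurableSpace X] {μ ν : Measure X} [HaveLebesgueDecomposition μ ν]
  [SFinite ν]

theorem rpow_sub_one_mul_measure_le_rnDeriv_le_lintegral_rpow (hμν : μ ≪ ν) {α : ℝ}
    (hα : 1 ≤ α) (t : ℝ≥0∞) :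
    t ^ (α - 1) * μ {x | t ≤ μ.rnDeriv ν x} ≤ ∫⁻ x, μ.rnDeriv ν x ^ α ∂ν := by
  set T := {x | t ≤ μ.rnDeriv ν x}
  have hT : MeasurableSet T := measurableSet_le measurable_const (measurable_rnDeriv μ ν)
  calc t ^ (α - 1) * μ T = ∫⁻ x in T, t ^ (α - 1) * μ.rnDeriv ν x ∂ν := by
        rw [lintegral_const_mul _ (measurable_rnDeriv μ ν), setLIntegral_rnDeriv hμν]
    _ ≤ ∫⁻ x in T, μ.rnDeriv ν x ^ α ∂ν :=
        setLIntegral_mono' hT fun _ hx => rpow_sub_one_mul_le_rpow hα hx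
    _ ≤ ∫⁻ x, μ.rnDeriv ν x ^ α ∂ν := setLIntegral_le_lintegral _ _

theorem measure_le_mul_add_measure_le_rnDeriv (hμν : μ ≪ ν) (t : ℝ≥0∞) {S : Set X}
    (hS : MeasurableSet S) :
    μ S ≤ t * ν S + μ {x | t ≤ μ.rnDeriv ν x} := by
  set T := {x | t ≤ μ.rnDeriv ν x}
  have hT : MeasurableSet T := measurableSet_le measurable_const (measurable_rnDeriv μ ν)
  have h_below : μ (S \ T) ≤ t * ν S :=
    calc μ (S \ T) = ∫⁻ x in S \ T, μ.rnDeriv ν x ∂ν := (setLIntegral_rnDeriv hμν _).symm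
      _ ≤ ∫⁻ _ in S \ T, t ∂ν := setLIntegral_mono' (hS.diff hT) fun _ hx => (not_le.1 hx.2).le
      _ = t * ν (S \ T) := setLIntegral_const _ _
      _ ≤ t * ν S := by gcongr; exact Set.sdiff_subset
  calc μ S ≤ μ (S ∩ T) + μ (S \ T) := measure_le_inter_add_sdiff _ _ _
    _ ≤ μ T + t * ν S := by gcongr; exact Set.inter_subset_right
    _ = t * ν S + μ T := add_comm _ _

end MeasureTheory.Measure

theorem rdp_to_dp_general
    {X : Type*} [MeasurableSpace X] (μ ν : Measure X)
    [IsProbabilityMeasure μ] [IsProbabilityMeasure ν] (hac : μ ≪ ν)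
    (α ε δ : ℝ) (hα : 1 < α) (hδ : δ ∈ Set.Ioo (0 : ℝ) 1)
    (hD : (∫⁻ x, μ.rnDeriv ν x ^ α ∂ν) ≤ ENNReal.ofReal (Real.exp ((α - 1) * ε))) :
    ∀ S : Set X, MeasurableSet S →
      μ S ≤ ENNReal.ofReal (Real.exp (ε + Real.log (1 / δ) / (α - 1))) * ν S +
        ENNReal.ofReal δ := by
  intro S hS
  set c := Real.exp (ε + Real.log (1 / δ) / (α - 1))
  have hc : c ^ (α - 1) * δ = Real.exp ((α - 1) * ε) := by
    rw [← Real.exp_mul, add_mul, div_mul_cancel₀ _ (sub_pos.2 hα).ne', Real.exp_add,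
      Real.exp_log (one_div_pos.2 hδ.1), mul_assoc, one_div_mul_cancel hδ.1.ne', mul_one, mul_comm]
  have hc_pow : ENNReal.ofReal c ^ (α - 1) * ENNReal.ofReal δ =
      ENNReal.ofReal (Real.exp ((α - 1) * ε)) := by
    rw [ofReal_rpow_of_pos (Real.exp_pos _), ← ofReal_mul (by positivity), hc]
  have h_tail : μ {x | ENNReal.ofReal c ≤ μ.rnDeriv ν x} ≤ ENNReal.ofReal δ := by
    rw [← ENNReal.mul_le_mul_iff_right
      (rpow_pos (ofReal_pos.2 (Real.exp_pos _)) ofReal_ne_top).ne'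
      (rpow_ne_top_of_nonneg (sub_nonneg.2 hα.le) ofReal_ne_top), hc_pow]
    exact (Measure.rpow_sub_one_mul_measure_le_rnDeriv_le_lintegral_rpow hac hα.le _).trans hD
  exact (Measure.measure_le_mul_add_measure_le_rnDeriv hac _ hS).trans (by gcongr)

/-- **RDP to DP conversion.**
Let `μ ≪ ν` be probability measures, `α > 1`, `δ ∈ (0,1)`, `ε ≥ 0`. If the order-`α`
Rényi divergence satisfies `(α−1)⁻¹ log ∫ (dμ/dν)^α dν ≤ ε` (stated equivalently as
`∫ (dμ/dν)^α dν ≤ exp ((α−1)ε)`), then for every measurable `S`: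
`μ(S) ≤ exp (ε + log(1/δ)/(α−1)) · ν(S) + δ`. -/
theorem rdp_to_dp
    {X : Type*} [MeasurableSpace X] (μ ν : Measure X)
    [IsProbabilityMeasure μ] [IsProbabilityMeasure ν] (hac : μ ≪ ν)
    (α ε δ : ℝ) (hα : 1 < α) (hδ : δ ∈ Set.Ioo (0 : ℝ) 1) (hε : 0 ≤ ε)
    (hD : (∫⁻ x, μ.rnDeriv ν x ^ α ∂ν) ≤ ENNReal.ofReal (Real.exp ((α - 1) * ε))) :
    ∀ S : Set X, MeasurableSet S →
      μ S ≤ ENNReal.ofReal (Real.exp (ε + Real.log (1 / δ) / (α - 1))) * ν S +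
        ENNReal.ofReal δ :=
  rdp_to_dp_general μ ν hac α ε δ hα hδ hD
end

section
/- (Primal value equals dual value at the Sinkhorn fixed point.) Fix n, m ≥ 1, weight vectors μ ∈ ℝ^n and ν ∈ ℝ^m with μ_i > 0, ν_j > 0, Σ_i μ_i = 1, Σ_j ν_j = 1, a cost matrix C ∈ ℝ^{n×m}, and λ > 0. Suppose f ∈ ℝ^n and g ∈ ℝ^m satisfy the Sinkhorn fixed-point equations f_i = −λ log Σ_j ν_j exp((g_j − C_{ij})/λ) and g_j = −λ log Σ_i μ_i exp((f_i − C_{ij})/λ), and let P_{ij} = μ_i ν_j exp((f_i + g_j − C_{ij})/λ). Then the entropic primal objective at P equals the dual objective at (f, g): Σ_{i,j} C_{ij} P_{ij} + λ Σ_{i,j} P_{ij} log(P_{ij}/(μ_i ν_j)) = Σ_i μ_i f_i + Σ_j ν_j g_j. -/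
open Real Finset

/-!
At a Sinkhorn fixed point the plan `P_ij = μ_i ν_j exp((f_i + g_j - C_ij)/λ)` has marginals
`μ` and `ν`: each fixed-point equation says exactly that `exp(f_i/λ)` normalises the `i`-th row
(and `exp(g_j/λ)` the `j`-th column). Since `λ log(P_ij/(μ_i ν_j)) = f_i + g_j - C_ij`, the
primal integrand collapses to `P_ij (f_i + g_j)`, whose total is `⟨μ, f⟩ + ⟨ν, g⟩` by the
marginal constraints.
-/

lemma exp_div_mul_eq_one_of_eq_neg_mul_log {a S lam : ℝ} (hS : 0 < S) (hlam : lam ≠ 0)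
    (ha : a = -lam * log S) : exp (a / lam) * S = 1 := by
  rw [ha, neg_mul, neg_div, mul_div_cancel_left₀ _ hlam, exp_neg, exp_log hS,
    inv_mul_cancel₀ hS.ne']

section Marginals

variable {ι κ : Type*} [Fintype κ]

lemma sum_mul_mul_exp_eq_of_eq_neg_mul_log [Nonempty κ] (μ : ι → ℝ) {ν : κ → ℝ}
    (hν : ∀ j, 0 < ν j) (C : ι → κ → ℝ) {lam : ℝ} (hlam : lam ≠ 0) {f : ι → ℝ} {g : κ → ℝ}
    (hf : ∀ i, f i = -lam * log (∑ j, ν j * exp ((g j - C i j) / lam))) (i : ι) :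
    ∑ j, μ i * ν j * exp ((f i + g j - C i j) / lam) = μ i := by
  have hS : 0 < ∑ j, ν j * exp ((g j - C i j) / lam) :=
    sum_pos (fun j _ => mul_pos (hν j) (exp_pos _)) univ_nonempty
  calc ∑ j, μ i * ν j * exp ((f i + g j - C i j) / lam)
      = μ i * (exp (f i / lam) * ∑ j, ν j * exp ((g j - C i j) / lam)) := by
        rw [mul_sum, mul_sum]
        refine sum_congr rfl fun j _ => ?_
        rw [add_sub_assoc, add_div, exp_add]
        ring
    _ = μ i := by rw [exp_div_mul_eq_one_of_eq_neg_mul_log hS hlam (hf i), mul_one]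

lemma sum_sum_mul_add_eq_of_marginals [Fintype ι] {P : ι → κ → ℝ} {μ f : ι → ℝ} {ν g : κ → ℝ}
    (hrow : ∀ i, ∑ j, P i j = μ i) (hcol : ∀ j, ∑ i, P i j = ν j) :
    ∑ i, ∑ j, P i j * (f i + g j) = ∑ i, μ i * f i + ∑ j, ν j * g j := by
  simp only [mul_add, sum_add_distrib]
  rw [sum_comm (f := fun i j => P i j * g j)]
  simp only [← sum_mul, hrow, hcol]

end Marginals

theorem sinkhorn_primal_eq_dual_general
    (n m : ℕ) (hn : 1 ≤ n) (hm : 1 ≤ m)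
    (μ : Fin n → ℝ) (ν : Fin m → ℝ)
    (hμ : ∀ i, 0 < μ i) (hν : ∀ j, 0 < ν j)
    (C : Fin n → Fin m → ℝ) (lam : ℝ) (hlam : 0 < lam)
    (f : Fin n → ℝ) (g : Fin m → ℝ)
    (hf : ∀ i, f i = -lam * Real.log (∑ j, ν j * Real.exp ((g j - C i j) / lam)))
    (hg : ∀ j, g j = -lam * Real.log (∑ i, μ i * Real.exp ((f i - C i j) / lam)))
    (P : Fin n → Fin m → ℝ)
    (hP : ∀ i j, P i j = μ i * ν j * Real.exp ((f i + g j - C i j) / lam)) :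
    ∑ i, ∑ j, C i j * P i j +
        lam * ∑ i, ∑ j, P i j * Real.log (P i j / (μ i * ν j)) =
      ∑ i, μ i * f i + ∑ j, ν j * g j := by
  have : Nonempty (Fin n) := Fin.pos_iff_nonempty.mp hn
  have : Nonempty (Fin m) := Fin.pos_iff_nonempty.mp hm
  have hrow : ∀ i, ∑ j, P i j = μ i := by
    simpa only [← hP] using sum_mul_mul_exp_eq_of_eq_neg_mul_log μ hν C hlam.ne' hf
  have hcol : ∀ j, ∑ i, P i j = ν j := fun j => by
    simpa only [hP, mul_comm (ν j), add_comm (g j)] using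
      sum_mul_mul_exp_eq_of_eq_neg_mul_log ν hμ (fun j i => C i j) hlam.ne' hg j
  rw [← sum_sum_mul_add_eq_of_marginals hrow hcol, mul_sum, ← sum_add_distrib]
  refine sum_congr rfl fun i _ => ?_
  rw [mul_sum, ← sum_add_distrib]
  refine sum_congr rfl fun j _ => ?_
  rw [hP, mul_div_cancel_left₀ _ (mul_pos (hμ i) (hν j)).ne', log_exp]
  field_simp
  ring

/-- **Primal value equals dual value at the Sinkhorn fixed point.**
If `f, g` satisfy the Sinkhorn fixed-point equations and
`P_{ij} = μ_i ν_j exp((f_i + g_j − C_{ij})/lam)`, then the entropic primal objective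
at `P` equals the dual objective at `(f,g)`:
`Σ C_{ij} P_{ij} + lam Σ P_{ij} log(P_{ij}/(μ_i ν_j)) = ⟨μ,f⟩ + ⟨ν,g⟩`. -/
theorem sinkhorn_primal_eq_dual
    (n m : ℕ) (hn : 1 ≤ n) (hm : 1 ≤ m)
    (μ : Fin n → ℝ) (ν : Fin m → ℝ)
    (hμ : ∀ i, 0 < μ i) (hν : ∀ j, 0 < ν j)
    (hμ1 : ∑ i, μ i = 1) (hν1 : ∑ j, ν j = 1)
    (C : Fin n → Fin m → ℝ) (lam : ℝ) (hlam : 0 < lam)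
    (f : Fin n → ℝ) (g : Fin m → ℝ)
    (hf : ∀ i, f i = -lam * Real.log (∑ j, ν j * Real.exp ((g j - C i j) / lam)))
    (hg : ∀ j, g j = -lam * Real.log (∑ i, μ i * Real.exp ((f i - C i j) / lam)))
    (P : Fin n → Fin m → ℝ)
    (hP : ∀ i j, P i j = μ i * ν j * Real.exp ((f i + g j - C i j) / lam)) :
    ∑ i, ∑ j, C i j * P i j +
        lam * ∑ i, ∑ j, P i j * Real.log (P i j / (μ i * ν j)) =
      ∑ i, μ i * f i + ∑ j, ν j * g j :=
  sinkhorn_primal_eq_dual_general n m hn hm μ ν hμ hν C lam hlam f g hf hg P hP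
end
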